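/- arXiv:2402.00998 — 7 statements merged into one kernel-verified Lean document; each statement's English description precedes it below -/
import Mathlib

section
/- If z : ℝᴶ → ℝᴶ satisfies Walras' Law and the weak axiom of revealed preference (WARP) on the set of strictly positive price vectors, then the set of equilibrium prices {p ∈ ℝᴶ : p ≫ 0 and z(p) = 0} is convex. -/
/-- If the market excess demand function `z : ℝᴶ → ℝᴶ` satisfies Walras' Law
(`p · z p = 0` for all `p ≫ 0`) and the weak axiom of revealed preference
(for all `p, q ≫ 0`, if `q · z p ≤ 0` and `p · z q ≤ 0` then `z p = z q`),
then the set of equilibrium prices `{p | p ≫ 0 ∧ z p = 0}` is convex. -/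
theorem equilibrium_prices_convex_of_walras_and_warp
    (J : ℕ) (hJ : 0 < J) (z : (Fin J → ℝ) → (Fin J → ℝ))
    (walras : ∀ p : Fin J → ℝ, (∀ j, 0 < p j) → ∑ j, p j * z p j = 0)
    (warp : ∀ p q : Fin J → ℝ, (∀ j, 0 < p j) → (∀ j, 0 < q j) →
      ∑ j, q j * z p j ≤ 0 → ∑ j, p j * z q j ≤ 0 → z p = z q) :
    Convex ℝ {p : Fin J → ℝ | (∀ j, 0 < p j) ∧ z p = 0} := by
  rintro p ⟨hp, hzp⟩ q ⟨hq, hzq⟩ a b ha hb hab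
  set r : Fin J → ℝ := a • p + b • q with hr
  have hrpos : ∀ j, 0 < r j := by
    intro j
    rcases eq_or_lt_of_le ha with h | h
    · have hb1 : b = 1 := by linarith
      simp [hr, ← h, hb1, hq j]
    · have : 0 < a * p j := mul_pos h (hp j)
      have : 0 ≤ b * q j := mul_nonneg hb (hq j).le
      simp only [hr, Pi.add_apply, Pi.smul_apply, smul_eq_mul]
      linarith
  refine ⟨hrpos, ?_⟩
  have hw := walras r hrpos
  have hsplit : a * (∑ j, p j * z r j) + b * (∑ j, q j * z r j) = 0 := by
    rw [Finset.mul_sum, Finset.mul_sum, ← Finset.sum_add_distrib, ← hw]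
    apply Finset.sum_congr rfl
    intro j _
    simp only [hr, Pi.add_apply, Pi.smul_apply, smul_eq_mul]
    ring
  -- one of the two is ≤ 0
  have key : (∑ j, p j * z r j) ≤ 0 ∨ (∑ j, q j * z r j) ≤ 0 := by
    by_contra h
    push_neg at h
    have h1 := mul_nonneg ha h.1.le
    have h2 := mul_nonneg hb h.2.le
    rcases eq_or_lt_of_le ha with h' | h'
    · have hb1 : (0:ℝ) < b := by linarith
      nlinarith [h.2]
    · nlinarith [h.1]
  rcases key with h | h
  · have : z r = z p := by
      apply warp r p hrpos hp h
      simp [hzp]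
    rw [this, hzp]
  · have : z r = z q := by
      apply warp r q hrpos hq h
      simp [hzq]
    rw [this, hzq]
end

section
/- Suppose b > 0 and u'(a) > β v'(b). If (P_t)_{t≥0} is a sequence with 0 ≤ P_t < a for all t that satisfies the equilibrium condition −u'(a − P_t) P_t + β v'(b + P_{t+1}) P_{t+1} = 0 for all t and converges to 0, then P_t = 0 for all t; that is, the non-monetary steady state is locally determinate. -/
/-- Two-period OLG model (Gale 1973, Theorem 4 / Proposition 1(1)): local
determinacy of the non-monetary steady state.  Suppose `b > 0` and
`u' a > β * v' b`.  If `(P t)` is a price sequence with `0 ≤ P t < a` for all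
`t`, satisfying the equilibrium condition
`-(u' (a - P t)) * P t + β * v' (b + P (t+1)) * P (t+1) = 0` for all `t`, and
converging to `0`, then `P t = 0` for all `t`. -/
theorem nonmonetary_steady_state_locally_determinate
    (u v u' u'' v' v'' : ℝ → ℝ) (β a b : ℝ)
    (hβ : 0 < β) (ha : 0 < a) (hb : 0 < b)
    (hu' : ∀ x ∈ Set.Ioi (0 : ℝ), HasDerivAt u (u' x) x)
    (hu'' : ∀ x ∈ Set.Ioi (0 : ℝ), HasDerivAt u' (u'' x) x)
    (hu''cont : ContinuousOn u'' (Set.Ioi 0))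
    (hv' : ∀ x ∈ Set.Ioi (0 : ℝ), HasDerivAt v (v' x) x)
    (hv'' : ∀ x ∈ Set.Ioi (0 : ℝ), HasDerivAt v' (v'' x) x)
    (hv''cont : ContinuousOn v'' (Set.Ioi 0))
    (hu'pos : ∀ x ∈ Set.Ioi (0 : ℝ), 0 < u' x)
    (hu''neg : ∀ x ∈ Set.Ioi (0 : ℝ), u'' x < 0)
    (hv'pos : ∀ x ∈ Set.Ioi (0 : ℝ), 0 < v' x)
    (hv''neg : ∀ x ∈ Set.Ioi (0 : ℝ), v'' x < 0)
    (hcond : β * v' b < u' a)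
    (P : ℕ → ℝ) (hP0 : ∀ t, 0 ≤ P t) (hPa : ∀ t, P t < a)
    (heq : ∀ t, -(u' (a - P t)) * P t + β * v' (b + P (t + 1)) * P (t + 1) = 0)
    (hlim : Filter.Tendsto P Filter.atTop (nhds 0)) :
    ∀ t, P t = 0 := by
  -- Basic positivity facts
  have haP : ∀ t, (0:ℝ) < a - P t := fun t => by linarith [hPa t]
  have hbP : ∀ t, (0:ℝ) < b + P t := fun t => by linarith [hP0 t]
  -- key rewritten equilibrium condition
  have heq' : ∀ t, u' (a - P t) * P t = β * v' (b + P (t + 1)) * P (t + 1) := by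
    intro t; have := heq t; linarith
  -- positivity propagates forward
  have hpos_step : ∀ t, 0 < P t → 0 < P (t + 1) := by
    intro t ht
    have h1 : 0 < u' (a - P t) * P t :=
      mul_pos (hu'pos _ (haP t)) ht
    rw [heq' t] at h1
    have h2 : 0 < β * v' (b + P (t + 1)) :=
      mul_pos hβ (hv'pos _ (hbP (t + 1)))
    by_contra h
    push_neg at h
    have hz : P (t + 1) = 0 := le_antisymm h (hP0 _)
    rw [hz, mul_zero] at h1
    exact lt_irrefl 0 h1
  -- the threshold K
  set K : ℝ := (u' a + β * v' b) / 2 with hK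
  have hK1 : β * v' b < K := by rw [hK]; linarith
  have hK2 : K < u' a := by rw [hK]; linarith
  have hKpos : 0 < K := lt_trans (mul_pos hβ (hv'pos b (by exact hb))) hK1
  -- continuity of x ↦ u' (a - x) at 0 and x ↦ β * v' (b + x) at 0
  have hu'cont : ContinuousAt u' a := (hu'' a (by exact ha)).continuousAt
  have hv'cont : ContinuousAt v' b := (hv'' b (by exact hb)).continuousAt
  have hF : Filter.Tendsto (fun x : ℝ => u' (a - x)) (nhds 0) (nhds (u' a)) := by
    have h1 : Filter.Tendsto (fun x : ℝ => a - x) (nhds 0) (nhds a) := by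
      simpa using (tendsto_const_nhds.sub Filter.tendsto_id : Filter.Tendsto (fun x : ℝ => a - x) (nhds 0) (nhds (a - 0)))
    exact hu'cont.tendsto.comp h1
  have hG : Filter.Tendsto (fun x : ℝ => β * v' (b + x)) (nhds 0) (nhds (β * v' b)) := by
    have h1 : Filter.Tendsto (fun x : ℝ => b + x) (nhds 0) (nhds b) := by
      simpa using (tendsto_const_nhds.add Filter.tendsto_id : Filter.Tendsto (fun x : ℝ => b + x) (nhds 0) (nhds (b + 0)))
    exact (hv'cont.tendsto.comp h1).const_mul β
  -- eventual bounds along the sequence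
  have hFe : ∀ᶠ x : ℝ in nhds 0, K < u' (a - x) := hF.eventually (eventually_gt_nhds hK2)
  have hGe : ∀ᶠ x : ℝ in nhds 0, β * v' (b + x) < K := hG.eventually (eventually_lt_nhds hK1)
  have hNev : ∀ᶠ n in Filter.atTop, K < u' (a - P n) ∧ β * v' (b + P n) < K :=
    hlim.eventually (hFe.and hGe)
  obtain ⟨N, hN⟩ := Filter.eventually_atTop.mp hNev
  -- main argument
  intro t
  by_contra ht0
  have ht : 0 < P t := lt_of_le_of_ne (hP0 t) (Ne.symm ht0)
  set M := max t N with hM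
  -- positivity up to and beyond M
  have hpos : ∀ k, 0 < P (t + k) := by
    intro k
    induction k with
    | zero => simpa using ht
    | succ k ih => exact hpos_step _ ih
  have hposM : ∀ n, t ≤ n → 0 < P n := by
    intro n hn
    obtain ⟨k, rfl⟩ := Nat.exists_eq_add_of_le hn
    exact hpos k
  have hPM : 0 < P M := hposM M (le_max_left _ _)
  -- monotone growth beyond M
  have hgrow : ∀ n, N ≤ n → 0 < P n → P n < P (n + 1) := by
    intro n hn hPn
    have h1 := (hN n hn).1
    have h2 := (hN (n + 1) (le_trans hn (Nat.le_succ _))).2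
    have hPn1 : 0 < P (n + 1) := hpos_step n hPn
    have e := heq' n
    nlinarith
  have hmono : ∀ k, P M ≤ P (M + k) := by
    intro k
    induction k with
    | zero => simp
    | succ k ih =>
      have hNk : N ≤ M + k := le_trans (le_max_right _ _) (Nat.le_add_right _ _)
      have hPk : 0 < P (M + k) := hposM _ (le_trans (le_max_left t N) (Nat.le_add_right _ _))
      have := hgrow (M + k) hNk hPk
      calc P M ≤ P (M + k) := ih
        _ ≤ P (M + k + 1) := this.le
  -- contradiction with convergence to 0
  have hev : ∀ᶠ n in Filter.atTop, P n < P M := hlim.eventually (eventually_lt_nhds hPM)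
  obtain ⟨N', hN'⟩ := Filter.eventually_atTop.mp hev
  have hlt := hN' (M + N') (Nat.le_add_left _ _)
  have hge := hmono N'
  linarith
end

section
/- Suppose b > 0 and u'(a) < β v'(b). Then there exists ε > 0 such that for every P₀ ∈ (0, ε) there exists a sequence (P_t)_{t≥0} starting at P₀ with P_t > 0 for all t, satisfying the equilibrium condition −u'(a − P_t) P_t + β v'(b + P_{t+1}) P_{t+1} = 0 for all t, and converging to 0; that is, the non-monetary steady state is locally indeterminate. -/
set_option maxHeartbeats 1000000


/-- Two-period OLG model (Gale 1973, Theorem 4 / Proposition 1(2)): local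
indeterminacy of the non-monetary steady state.  Suppose `b > 0` and
`u' a < β * v' b`.  Then there exists `ε > 0` such that for every
`P₀ ∈ (0, ε)` there is a price sequence `(P t)` starting at `P₀`, strictly
positive, satisfying the equilibrium condition
`-(u' (a - P t)) * P t + β * v' (b + P (t+1)) * P (t+1) = 0` for all `t`, and
converging to `0`. -/
theorem nonmonetary_steady_state_locally_indeterminate
    (u v u' u'' v' v'' : ℝ → ℝ) (β a b : ℝ)
    (hβ : 0 < β) (ha : 0 < a) (hb : 0 < b)
    (hu' : ∀ x ∈ Set.Ioi (0 : ℝ), HasDerivAt u (u' x) x)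
    (hu'' : ∀ x ∈ Set.Ioi (0 : ℝ), HasDerivAt u' (u'' x) x)
    (hu''cont : ContinuousOn u'' (Set.Ioi 0))
    (hv' : ∀ x ∈ Set.Ioi (0 : ℝ), HasDerivAt v (v' x) x)
    (hv'' : ∀ x ∈ Set.Ioi (0 : ℝ), HasDerivAt v' (v'' x) x)
    (hv''cont : ContinuousOn v'' (Set.Ioi 0))
    (hu'pos : ∀ x ∈ Set.Ioi (0 : ℝ), 0 < u' x)
    (hu''neg : ∀ x ∈ Set.Ioi (0 : ℝ), u'' x < 0)
    (hv'pos : ∀ x ∈ Set.Ioi (0 : ℝ), 0 < v' x)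
    (hv''neg : ∀ x ∈ Set.Ioi (0 : ℝ), v'' x < 0)
    (hcond : u' a < β * v' b) :
    ∃ ε > 0, ∀ P₀ ∈ Set.Ioo 0 ε, ∃ P : ℕ → ℝ,
      P 0 = P₀ ∧ (∀ t, 0 < P t) ∧
      (∀ t, -(u' (a - P t)) * P t + β * v' (b + P (t + 1)) * P (t + 1) = 0) ∧
      Filter.Tendsto P Filter.atTop (nhds 0) := by
  -- continuity of u' at a and v' at b
  have hu'c : ContinuousAt u' a := (hu'' a ha).continuousAt
  have hv'c : ContinuousAt v' b := (hv'' b hb).continuousAt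
  have hcont : ContinuousAt (fun e : ℝ => β * v' (b + e) - u' (a - e)) 0 := by
    apply ContinuousAt.sub
    · apply continuousAt_const.mul
      have : ContinuousAt (fun e : ℝ => b + e) 0 := by fun_prop
      have h2 : ContinuousAt v' (b + 0) := by simpa using hv'c
      exact h2.comp this
    · have : ContinuousAt (fun e : ℝ => a - e) 0 := by fun_prop
      have h2 : ContinuousAt u' (a - 0) := by simpa using hu'c
      exact h2.comp this
  have h0pos : 0 < β * v' (b + 0) - u' (a - 0) := by simpa using sub_pos.mpr hcond
  have hev : ∀ᶠ e in nhds (0:ℝ), 0 < β * v' (b + e) - u' (a - e) :=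
    ContinuousAt.eventually_lt continuousAt_const hcont h0pos
  rw [Metric.eventually_nhds_iff] at hev
  obtain ⟨δ, hδpos, hδ⟩ := hev
  set ε : ℝ := min (δ / 2) (a / 2) with hεdef
  have hεpos : 0 < ε := lt_min (by linarith) (by linarith)
  have hεa : ε < a := lt_of_le_of_lt (min_le_right _ _) (by linarith)
  have hεδ : dist ε (0:ℝ) < δ := by
    rw [Real.dist_eq, sub_zero, abs_of_pos hεpos]
    exact lt_of_le_of_lt (min_le_left _ _) (by linarith)
  have hkey : u' (a - ε) < β * v' (b + ε) := by
    have := hδ hεδ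
    linarith
  have haε : (0:ℝ) < a - ε := by linarith
  have hbε : (0:ℝ) < b + ε := by linarith
  set c1 : ℝ := u' (a - ε) with hc1
  set c2 : ℝ := β * v' (b + ε) with hc2
  have hc1pos : 0 < c1 := hu'pos _ haε
  have hc2pos : 0 < c2 := mul_pos hβ (hv'pos _ hbε)
  set r : ℝ := c1 / c2 with hr
  have hrpos : 0 < r := div_pos hc1pos hc2pos
  have hrlt : r < 1 := (div_lt_one hc2pos).mpr hkey
  -- antitonicity of u' and v' on Ioi 0
  have hu'anti : StrictAntiOn u' (Set.Ioi 0) := by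
    apply strictAntiOn_of_deriv_neg (convex_Ioi 0)
    · exact fun x hx => ((hu'' x hx).continuousAt.continuousWithinAt)
    · intro x hx
      rw [interior_Ioi] at hx
      rw [(hu'' x hx).deriv]
      exact hu''neg x hx
  have hv'anti : StrictAntiOn v' (Set.Ioi 0) := by
    apply strictAntiOn_of_deriv_neg (convex_Ioi 0)
    · exact fun x hx => ((hv'' x hx).continuousAt.continuousWithinAt)
    · intro x hx
      rw [interior_Ioi] at hx
      rw [(hv'' x hx).deriv]
      exact hv''neg x hx
  -- key step: one-step existence with contraction
  have key : ∀ x : ℝ, 0 < x → x ≤ ε →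
      ∃ y, 0 < y ∧ y ≤ r * x ∧ β * v' (b + y) * y = u' (a - x) * x := by
    intro x hx hxε
    have hax : 0 < a - x := by linarith
    set g : ℝ → ℝ := fun y => β * v' (b + y) * y with hg
    have hgcont : ContinuousOn g (Set.Icc 0 x) := by
      apply ContinuousOn.mul _ continuousOn_id
      apply continuousOn_const.mul
      intro y hy
      have hby : (0:ℝ) < b + y := by have := hy.1; linarith
      have : ContinuousAt (fun y : ℝ => v' (b + y)) y := by
        have h1 : ContinuousAt (fun y : ℝ => b + y) y := by fun_prop
        exact ((hv'' _ hby).continuousAt).comp h1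
      exact this.continuousWithinAt
    set T : ℝ := u' (a - x) * x with hT
    have hTpos : 0 < T := mul_pos (hu'pos _ hax) hx
    have hu'x : u' (a - x) ≤ c1 := by
      rcases eq_or_lt_of_le (show a - ε ≤ a - x by linarith) with h | h
      · rw [hc1, h]
      · exact le_of_lt (hu'anti haε (by exact hax) h) |>.trans_eq rfl
    have hv'x : c2 ≤ β * v' (b + x) := by
      rcases eq_or_lt_of_le (show b + x ≤ b + ε by linarith) with h | h
      · rw [hc2, h]
      · have := hv'anti (show b + x ∈ Set.Ioi (0:ℝ) by simp; linarith) hbε h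
        rw [hc2]
        nlinarith
    have hgx : T ≤ g x := by
      have : c1 * x ≤ β * v' (b + x) * x := by nlinarith
      calc T ≤ c1 * x := by nlinarith
        _ ≤ g x := this
    have hg0 : g 0 = 0 := by simp [hg]
    have hmem : T ∈ Set.Icc (g 0) (g x) := ⟨by rw [hg0]; linarith, hgx⟩
    obtain ⟨y, hy, hgy⟩ := intermediate_value_Icc (le_of_lt hx) hgcont hmem
    have hyne : y ≠ 0 := by
      intro h; rw [h, hg0] at hgy; linarith
    have hypos : 0 < y := lt_of_le_of_ne hy.1 (Ne.symm hyne)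
    refine ⟨y, hypos, ?_, hgy⟩
    have hv'y : c2 ≤ β * v' (b + y) := by
      rcases eq_or_lt_of_le (show b + y ≤ b + ε by have := hy.2; linarith) with h | h
      · rw [hc2, h]
      · have := hv'anti (show b + y ∈ Set.Ioi (0:ℝ) by simp; linarith) hbε h
        rw [hc2]; nlinarith
    have h1 : c2 * y ≤ T := by
      calc c2 * y ≤ β * v' (b + y) * y := by nlinarith
        _ = T := hgy
    have h2 : T ≤ c1 * x := by nlinarith
    rw [hr, div_mul_eq_mul_div, le_div_iff₀ hc2pos]
    nlinarith
  -- build the sequence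
  refine ⟨ε, hεpos, ?_⟩
  intro P₀ hP₀
  obtain ⟨hP0pos, hP0lt⟩ := hP₀
  classical
  set F : ℝ → ℝ := fun x => if h : 0 < x ∧ x ≤ ε then (key x h.1 h.2).choose else 0 with hF
  set P : ℕ → ℝ := fun t => F^[t] P₀ with hP
  have hinv : ∀ t, 0 < P t ∧ P t ≤ r ^ t * P₀ := by
    intro t
    induction t with
    | zero => exact ⟨hP0pos, by simp [hP]⟩
    | succ n ih =>
      have hle : P n ≤ ε := by
        have h1 : r ^ n ≤ 1 := pow_le_one₀ (le_of_lt hrpos) (le_of_lt hrlt)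
        have := ih.2
        nlinarith
      have hcond' : 0 < P n ∧ P n ≤ ε := ⟨ih.1, hle⟩
      have hstep : P (n + 1) = (key (P n) ih.1 hle).choose := by
        have h1 : P (n + 1) = F (P n) := Function.iterate_succ_apply' F n P₀
        rw [h1, hF]
        simp only []
        rw [dif_pos hcond']
      obtain ⟨h1, h2, h3⟩ := (key (P n) ih.1 hle).choose_spec
      rw [hstep]
      refine ⟨h1, ?_⟩
      calc (key (P n) ih.1 hle).choose ≤ r * P n := h2
        _ ≤ r * (r ^ n * P₀) := by nlinarith [ih.2]
        _ = r ^ (n + 1) * P₀ := by ring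
  refine ⟨P, by simp [hP], fun t => (hinv t).1, ?_, ?_⟩
  · intro t
    have hle : P t ≤ ε := by
      have h1 : r ^ t ≤ 1 := pow_le_one₀ (le_of_lt hrpos) (le_of_lt hrlt)
      have := (hinv t).2
      nlinarith [(hinv t).1]
    have hstep : P (t + 1) = (key (P t) (hinv t).1 hle).choose := by
      have h1 : P (t + 1) = F (P t) := Function.iterate_succ_apply' F t P₀
      rw [h1, hF]
      simp only []
      rw [dif_pos ⟨(hinv t).1, hle⟩]
    obtain ⟨h1, h2, h3⟩ := (key (P t) (hinv t).1 hle).choose_spec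
    rw [hstep]
    linarith [h3]
  · have hgeo : Filter.Tendsto (fun t : ℕ => r ^ t * P₀) Filter.atTop (nhds 0) := by
      have := tendsto_pow_atTop_nhds_zero_of_lt_one (le_of_lt hrpos) hrlt
      simpa using this.mul_const P₀
    exact squeeze_zero (fun t => le_of_lt (hinv t).1) (fun t => (hinv t).2) hgeo
end

section
/- Let P ∈ (0, a) be a monetary steady state (u'(a − P) = β v'(b + P)). If the relative risk aversion of the old satisfies γ_v(b + P) < 1 + b/P, where γ_v(z) = −z v''(z)/v'(z), then Φ_η(P, P) > 0 and the implicit slope satisfies φ'(P) = −Φ_ξ(P, P)/Φ_η(P, P) > 1; consequently the monetary steady state is locally determinate. -/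
/-!
With `z = b + P`, `Φ_η(P, P) = β v'(z) (1 - γ_v(z) P / z)`, so the risk-aversion bound
`γ_v(z) < 1 + b / P = z / P` says exactly that `Φ_η(P, P) > 0`. At a steady state
`u'(a - P) = β v'(z)`, hence `-Φ_ξ(P, P) - Φ_η(P, P) = -(u''(a - P) + β v''(z)) P > 0`
by concavity, which is the slope bound once `Φ_η(P, P) > 0`.
-/

namespace OLG

/-- `γ_v`, the relative risk aversion of `v`. -/
noncomputable def rra (v' v'' : ℝ → ℝ) (z : ℝ) : ℝ := -z * v'' z / v' z

def phiXi (u' u'' : ℝ → ℝ) (a ξ : ℝ) : ℝ := -u' (a - ξ) + u'' (a - ξ) * ξ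

def phiEta (v' v'' : ℝ → ℝ) (β b η : ℝ) : ℝ := β * v' (b + η) + β * v'' (b + η) * η

theorem rra_lt_iff_phiEta_pos {v' v'' : ℝ → ℝ} {β b P : ℝ} (hβ : 0 < β) (hP : 0 < P)
    (hz : 0 < b + P) (hv' : 0 < v' (b + P)) :
    rra v' v'' (b + P) < 1 + b / P ↔ 0 < phiEta v' v'' β b P := by
  have hbound : 1 + b / P = (b + P) / P := by field_simp; ring
  have hphi : phiEta v' v'' β b P = β * (v' (b + P) + v'' (b + P) * P) := by
    rw [phiEta]; ring
  have hcross : (b + P) * v' (b + P) - -(b + P) * v'' (b + P) * P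
      = (b + P) * (v' (b + P) + v'' (b + P) * P) := by ring
  rw [rra, hbound, div_lt_div_iff₀ hv' hP, ← sub_pos, hcross, mul_pos_iff_of_pos_left hz,
    hphi, mul_pos_iff_of_pos_left hβ]

theorem one_lt_neg_phiXi_div_phiEta {u' u'' v' v'' : ℝ → ℝ} {β a b P : ℝ} (hβ : 0 < β)
    (hP : 0 < P) (hss : u' (a - P) = β * v' (b + P)) (hu'' : u'' (a - P) < 0)
    (hv'' : v'' (b + P) < 0) (hη : 0 < phiEta v' v'' β b P) :
    1 < -phiXi u' u'' a P / phiEta v' v'' β b P := by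
  have hsum : u'' (a - P) + β * v'' (b + P) < 0 := add_neg hu'' (mul_neg_of_pos_of_neg hβ hv'')
  have hgap : 0 < -(u'' (a - P) + β * v'' (b + P)) * P := mul_pos (neg_pos.2 hsum) hP
  rw [one_lt_div hη, phiXi, phiEta, hss]
  linarith

end OLG

theorem monetary_steady_state_locally_determinate_general
    (u' u'' v' v'' : ℝ → ℝ) (β a b : ℝ)
    (hβ : 0 < β) (hb : 0 ≤ b)
    (hu''neg : ∀ x ∈ Set.Ioi (0 : ℝ), u'' x < 0)
    (hv'pos : ∀ x ∈ Set.Ioi (0 : ℝ), 0 < v' x)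
    (hv''neg : ∀ x ∈ Set.Ioi (0 : ℝ), v'' x < 0)
    (P : ℝ) (hP : P ∈ Set.Ioo 0 a)
    (hss : u' (a - P) = β * v' (b + P))
    (hrra : -(b + P) * v'' (b + P) / v' (b + P) < 1 + b / P) :
    0 < β * v' (b + P) + β * v'' (b + P) * P ∧
    1 < -(-(u' (a - P)) + u'' (a - P) * P) /
          (β * v' (b + P) + β * v'' (b + P) * P) := by
  obtain ⟨hP0, hPa⟩ := hP
  have hz : b + P ∈ Set.Ioi (0 : ℝ) := Set.mem_Ioi.2 (by linarith)
  have hy : a - P ∈ Set.Ioi (0 : ℝ) := Set.mem_Ioi.2 (by linarith)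
  have hη : 0 < OLG.phiEta v' v'' β b P :=
    (OLG.rra_lt_iff_phiEta_pos hβ hP0 hz (hv'pos _ hz)).1 hrra
  exact ⟨hη, OLG.one_lt_neg_phiXi_div_phiEta hβ hP0 hss (hu''neg _ hy) (hv''neg _ hz) hη⟩

/-- Two-period OLG model (Proposition 2): local determinacy of the monetary
steady state.  Let `P ∈ (0, a)` be a monetary steady state
(`u' (a - P) = β * v' (b + P)`).  If the relative risk aversion of the old,
`γ_v (z) = -z * v'' z / v' z`, satisfies `γ_v (b + P) < 1 + b / P`, then
`Φ_η (P, P) = β * v' (b + P) + β * v'' (b + P) * P > 0` and the implicit slope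
`φ' (P) = -Φ_ξ (P, P) / Φ_η (P, P) > 1`, where
`Φ_ξ (P, P) = -(u' (a - P)) + u'' (a - P) * P`; consequently the monetary
steady state is locally determinate. -/
theorem monetary_steady_state_locally_determinate
    (u v u' u'' v' v'' : ℝ → ℝ) (β a b : ℝ)
    (hβ : 0 < β) (ha : 0 < a) (hb : 0 ≤ b)
    (hu' : ∀ x ∈ Set.Ioi (0 : ℝ), HasDerivAt u (u' x) x)
    (hu'' : ∀ x ∈ Set.Ioi (0 : ℝ), HasDerivAt u' (u'' x) x)
    (hu''cont : ContinuousOn u'' (Set.Ioi 0))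
    (hv' : ∀ x ∈ Set.Ioi (0 : ℝ), HasDerivAt v (v' x) x)
    (hv'' : ∀ x ∈ Set.Ioi (0 : ℝ), HasDerivAt v' (v'' x) x)
    (hv''cont : ContinuousOn v'' (Set.Ioi 0))
    (hu'pos : ∀ x ∈ Set.Ioi (0 : ℝ), 0 < u' x)
    (hu''neg : ∀ x ∈ Set.Ioi (0 : ℝ), u'' x < 0)
    (hv'pos : ∀ x ∈ Set.Ioi (0 : ℝ), 0 < v' x)
    (hv''neg : ∀ x ∈ Set.Ioi (0 : ℝ), v'' x < 0)
    (P : ℝ) (hP : P ∈ Set.Ioo 0 a)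
    (hss : u' (a - P) = β * v' (b + P))
    (hrra : -(b + P) * v'' (b + P) / v' (b + P) < 1 + b / P) :
    0 < β * v' (b + P) + β * v'' (b + P) * P ∧
    1 < -(-(u' (a - P)) + u'' (a - P) * P) /
          (β * v' (b + P) + β * v'' (b + P) * P) :=
  monetary_steady_state_locally_determinate_general u' u'' v' v'' β a b hβ hb hu''neg hv'pos hv''neg
    P hP hss hrra
end

section
/- Suppose b > 0 and the relative risk aversion of the old is everywhere at most one, i.e., γ_v(z) = −z v''(z)/v'(z) ≤ 1 for all z > 0. Then at every monetary steady state P ∈ (0, a) (u'(a − P) = β v'(b + P)) one has Φ_η(P, P) > 0 and −Φ_ξ(P, P)/Φ_η(P, P) > 1. -/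
/-- Two-period OLG model: if `b > 0` and the relative risk aversion of the old
is everywhere at most one (`-z * v'' z / v' z ≤ 1` for all `z > 0`), then at
every monetary steady state `P ∈ (0, a)` (`u' (a - P) = β * v' (b + P)`) one
has `Φ_η (P, P) = β * v' (b + P) + β * v'' (b + P) * P > 0` and
`-Φ_ξ (P, P) / Φ_η (P, P) > 1`, where
`Φ_ξ (P, P) = -(u' (a - P)) + u'' (a - P) * P`. -/
theorem monetary_steady_state_determinate_of_rra_le_one
    (u v u' u'' v' v'' : ℝ → ℝ) (β a b : ℝ)
    (hβ : 0 < β) (ha : 0 < a) (hb : 0 < b)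
    (hu' : ∀ x ∈ Set.Ioi (0 : ℝ), HasDerivAt u (u' x) x)
    (hu'' : ∀ x ∈ Set.Ioi (0 : ℝ), HasDerivAt u' (u'' x) x)
    (hu''cont : ContinuousOn u'' (Set.Ioi 0))
    (hv' : ∀ x ∈ Set.Ioi (0 : ℝ), HasDerivAt v (v' x) x)
    (hv'' : ∀ x ∈ Set.Ioi (0 : ℝ), HasDerivAt v' (v'' x) x)
    (hv''cont : ContinuousOn v'' (Set.Ioi 0))
    (hu'pos : ∀ x ∈ Set.Ioi (0 : ℝ), 0 < u' x)
    (hu''neg : ∀ x ∈ Set.Ioi (0 : ℝ), u'' x < 0)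
    (hv'pos : ∀ x ∈ Set.Ioi (0 : ℝ), 0 < v' x)
    (hv''neg : ∀ x ∈ Set.Ioi (0 : ℝ), v'' x < 0)
    (hrra : ∀ z ∈ Set.Ioi (0 : ℝ), -z * v'' z / v' z ≤ 1) :
    ∀ P ∈ Set.Ioo 0 a, u' (a - P) = β * v' (b + P) →
      0 < β * v' (b + P) + β * v'' (b + P) * P ∧
      1 < -(-(u' (a - P)) + u'' (a - P) * P) /
            (β * v' (b + P) + β * v'' (b + P) * P) := by
  intro P hP heq
  obtain ⟨hP0, hPa⟩ := hP
  have hz : (0:ℝ) < b + P := by linarith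
  have hzmem : b + P ∈ Set.Ioi (0:ℝ) := hz
  have hxmem : a - P ∈ Set.Ioi (0:ℝ) := by simp; linarith
  have hv'p := hv'pos _ hzmem
  have hv''n := hv''neg _ hzmem
  have hrr := hrra _ hzmem
  -- from RRA ≤ 1: -(b+P) * v'' ≤ v'
  have key : -(b + P) * v'' (b + P) ≤ v' (b + P) := by
    have := (div_le_one hv'p).mp hrr
    linarith
  have hden : 0 < v' (b + P) + v'' (b + P) * P := by nlinarith
  have hden' : 0 < β * v' (b + P) + β * v'' (b + P) * P := by nlinarith
  refine ⟨hden', ?_⟩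
  have hu'p := hu'pos _ hxmem
  have hu''n := hu''neg _ hxmem
  rw [lt_div_iff₀ hden']
  nlinarith [mul_pos hβ (mul_pos (neg_pos.mpr hv''n) hP0), mul_pos (neg_pos.mpr hu''n) hP0]
end

section
/- Non-substitution theorem, CES case: let each of J goods be produced under constant returns with CES unit cost functions c^j(p) = (a^j₀ + ∑_{k=1}^{J} a^j_k p_k^{1−σ_j})^{1/(1−σ_j)}, where a^j₀ > 0, a^j_k > 0, and σ_j > 0 with σ_j ≠ 1 for every j. Then the system of marginal-cost-pricing equations p_j = c^j(p) for all j has at most one solution p ∈ ℝᴶ₊₊; that is, if p* ≫ 0 and p** ≫ 0 both satisfy p = c(p), then p* = p**. -/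
/-!
Each CES cost `c^j` is monotone in the input prices and, thanks to the labor term `a^j₀ > 0`
paid at the fixed wage `1`, strictly subhomogeneous: `c^j(t • p) < t * c^j(p)` for `t > 1`.
If two positive price vectors `p₁, p₂` solve `p = c(p)` and `p₁ ≰ p₂`, let `t > 1` be the
largest ratio `p₁ k / p₂ k`, attained at `j`. Then `p₁ ≤ t • p₂`, and
`t * p₂ j = p₁ j = c^j(p₁) ≤ c^j(t • p₂) < t * c^j(p₂) = t * p₂ j`, a contradiction.
-/

open Finset

variable {ι : Type*} [Fintype ι]

theorem fixedPoint_le_of_strictSubhomogeneous (c : ι → (ι → ℝ) → ℝ)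
    (hmono : ∀ j q q', (∀ k, 0 < q k) → q ≤ q' → c j q ≤ c j q')
    (hsub : ∀ j q t, (∀ k, 0 < q k) → 1 < t → c j (t • q) < t * c j q)
    {p₁ p₂ : ι → ℝ} (hp₁ : ∀ k, 0 < p₁ k) (hp₂ : ∀ k, 0 < p₂ k)
    (h₁ : ∀ j, p₁ j = c j p₁) (h₂ : ∀ j, p₂ j = c j p₂) : p₁ ≤ p₂ := by
  by_contra hle
  obtain ⟨w, hw⟩ : ∃ w, p₂ w < p₁ w := by simpa [Pi.le_def] using hle
  obtain ⟨j, -, hj⟩ := exists_max_image univ (fun k => p₁ k / p₂ k) ⟨w, mem_univ w⟩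
  set t := p₁ j / p₂ j
  have ht : 1 < t :=
    ((one_lt_div (hp₂ w)).mpr hw).trans_le (hj w (mem_univ w))
  have hbound : p₁ ≤ t • p₂ := fun k => (div_le_iff₀ (hp₂ k)).mp (hj k (mem_univ k))
  have hattained : p₁ j = t * p₂ j := (div_mul_cancel₀ _ (hp₂ j).ne').symm
  have : p₁ j < t * p₂ j :=
    calc p₁ j = c j p₁ := h₁ j
      _ ≤ c j (t • p₂) := hmono j _ _ hp₁ hbound
      _ < t * c j p₂ := hsub j _ _ hp₂ ht
      _ = t * p₂ j := by rw [← h₂ j]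
  exact this.ne hattained

/-- The exponent is `ρ = 1 - σ`, where `σ` is the elasticity of substitution. -/
noncomputable def cesCost (a₀ : ℝ) (A : ι → ℝ) (ρ : ℝ) (q : ι → ℝ) : ℝ :=
  (a₀ + ∑ k, A k * q k ^ ρ) ^ (1 / ρ)

section CES

variable {a₀ : ℝ} {A : ι → ℝ} {ρ : ℝ}

lemma cesCost_base_pos (ha₀ : 0 < a₀) (hA : ∀ k, 0 ≤ A k) {q : ι → ℝ} (hq : ∀ k, 0 < q k) :
    0 < a₀ + ∑ k, A k * q k ^ ρ :=
  add_pos_of_pos_of_nonneg ha₀ <|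
    sum_nonneg fun k _ => mul_nonneg (hA k) (Real.rpow_nonneg (hq k).le ρ)

lemma cesCost_mono (hρ : ρ ≠ 0) (ha₀ : 0 < a₀) (hA : ∀ k, 0 ≤ A k) {q q' : ι → ℝ}
    (hq : ∀ k, 0 < q k) (hqq' : q ≤ q') : cesCost a₀ A ρ q ≤ cesCost a₀ A ρ q' := by
  have hq' : ∀ k, 0 < q' k := fun k => (hq k).trans_le (hqq' k)
  unfold cesCost
  rcases hρ.lt_or_gt with hneg | hpos
  · have hsum : ∑ k, A k * q' k ^ ρ ≤ ∑ k, A k * q k ^ ρ :=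
      sum_le_sum fun k _ => mul_le_mul_of_nonneg_left
        (Real.rpow_le_rpow_of_nonpos (hq k) (hqq' k) hneg.le) (hA k)
    exact Real.rpow_le_rpow_of_nonpos (cesCost_base_pos ha₀ hA hq') (by linarith)
      (one_div_neg.mpr hneg).le
  · have hsum : ∑ k, A k * q k ^ ρ ≤ ∑ k, A k * q' k ^ ρ :=
      sum_le_sum fun k _ => mul_le_mul_of_nonneg_left
        (Real.rpow_le_rpow (hq k).le (hqq' k) hpos.le) (hA k)
    exact Real.rpow_le_rpow (cesCost_base_pos ha₀ hA hq).le (by linarith) (by positivity)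

lemma cesCost_smul_lt (hρ : ρ ≠ 0) (ha₀ : 0 < a₀) (hA : ∀ k, 0 ≤ A k) {q : ι → ℝ}
    (hq : ∀ k, 0 < q k) {t : ℝ} (ht : 1 < t) :
    cesCost a₀ A ρ (t • q) < t * cesCost a₀ A ρ q := by
  have ht₀ : 0 < t := one_pos.trans ht
  set S := ∑ k, A k * q k ^ ρ
  have hS : 0 ≤ S := sum_nonneg fun k _ => mul_nonneg (hA k) (Real.rpow_nonneg (hq k).le ρ)
  have htρ : 0 < t ^ ρ := Real.rpow_pos_of_pos ht₀ ρ
  have hscale : cesCost a₀ A ρ (t • q) = (a₀ + t ^ ρ * S) ^ (1 / ρ) := by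
    simp only [cesCost, Pi.smul_apply, smul_eq_mul, S, mul_sum]
    congr 2
    refine sum_congr rfl fun k _ => ?_
    rw [Real.mul_rpow ht₀.le (hq k).le]
    ring
  have hhom : t * cesCost a₀ A ρ q = (t ^ ρ * (a₀ + S)) ^ (1 / ρ) := by
    rw [cesCost, Real.mul_rpow htρ.le (by positivity), ← Real.rpow_mul ht₀.le,
      mul_one_div_cancel hρ, Real.rpow_one]
  rw [hscale, hhom]
  -- the labor weight `a₀` is not rescaled by `t ^ ρ`
  rcases hρ.lt_or_gt with hneg | hpos
  · have : t ^ ρ < 1 := Real.rpow_lt_one_of_one_lt_of_neg ht hneg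
    exact Real.rpow_lt_rpow_of_neg (by positivity) (by nlinarith) (one_div_neg.mpr hneg)
  · have : 1 < t ^ ρ := Real.one_lt_rpow ht hpos
    exact Real.rpow_lt_rpow (by positivity) (by nlinarith) (by positivity)

end CES

theorem non_substitution_theorem_ces_general
    (J : ℕ)
    (σ : Fin J → ℝ) (hσ1 : ∀ j, σ j ≠ 1)
    (a₀ : Fin J → ℝ) (ha₀ : ∀ j, 0 < a₀ j)
    (A : Fin J → Fin J → ℝ) (hA : ∀ j k, 0 < A j k)
    (p₁ p₂ : Fin J → ℝ) (hp₁ : ∀ j, 0 < p₁ j) (hp₂ : ∀ j, 0 < p₂ j)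
    (heq₁ : ∀ j, p₁ j =
      (a₀ j + ∑ k, A j k * p₁ k ^ (1 - σ j)) ^ (1 / (1 - σ j)))
    (heq₂ : ∀ j, p₂ j =
      (a₀ j + ∑ k, A j k * p₂ k ^ (1 - σ j)) ^ (1 / (1 - σ j))) :
    p₁ = p₂ := by
  let c : Fin J → (Fin J → ℝ) → ℝ := fun j => cesCost (a₀ j) (A j) (1 - σ j)
  have hρ j : 1 - σ j ≠ 0 := sub_ne_zero.mpr (hσ1 j).symm
  have hA' j k : 0 ≤ A j k := (hA j k).le
  have hmono j (q q' : Fin J → ℝ) (hq : ∀ k, 0 < q k) (hqq' : q ≤ q') : c j q ≤ c j q' :=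
    cesCost_mono (hρ j) (ha₀ j) (hA' j) hq hqq'
  have hsub j (q : Fin J → ℝ) (t : ℝ) (hq : ∀ k, 0 < q k) (ht : 1 < t) :
      c j (t • q) < t * c j q :=
    cesCost_smul_lt (hρ j) (ha₀ j) (hA' j) hq ht
  exact le_antisymm
    (fixedPoint_le_of_strictSubhomogeneous c hmono hsub hp₁ hp₂ heq₁ heq₂)
    (fixedPoint_le_of_strictSubhomogeneous c hmono hsub hp₂ hp₁ heq₂ heq₁)

/-- Non-substitution theorem, CES case: each of `J` goods is produced under
constant returns with CES unit cost function
`c j p = (a₀ j + ∑ k, A j k * p k ^ (1 - σ j)) ^ (1 / (1 - σ j))`,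
with labor weight `a₀ j > 0`, input weights `A j k > 0`, and elasticity of
substitution `σ j > 0`, `σ j ≠ 1`, for every `j` (the wage is normalized to
`1`).  Then the marginal-cost-pricing system `p j = c j p` for all `j` has at
most one strictly positive solution: if `p* ≫ 0` and `p** ≫ 0` both solve it,
then `p* = p**`. -/
theorem non_substitution_theorem_ces
    (J : ℕ) (hJ : 0 < J)
    (σ : Fin J → ℝ) (hσ : ∀ j, 0 < σ j) (hσ1 : ∀ j, σ j ≠ 1)
    (a₀ : Fin J → ℝ) (ha₀ : ∀ j, 0 < a₀ j)
    (A : Fin J → Fin J → ℝ) (hA : ∀ j k, 0 < A j k)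
    (p₁ p₂ : Fin J → ℝ) (hp₁ : ∀ j, 0 < p₁ j) (hp₂ : ∀ j, 0 < p₂ j)
    (heq₁ : ∀ j, p₁ j =
      (a₀ j + ∑ k, A j k * p₁ k ^ (1 - σ j)) ^ (1 / (1 - σ j)))
    (heq₂ : ∀ j, p₂ j =
      (a₀ j + ∑ k, A j k * p₂ k ^ (1 - σ j)) ^ (1 / (1 - σ j))) :
    p₁ = p₂ :=
  non_substitution_theorem_ces_general J σ hσ1 a₀ ha₀ A hA p₁ p₂ hp₁ hp₂ heq₁ heq₂
end

section
/- Let B be a J × J real matrix with nonnegative entries, and suppose there exists a vector p ∈ ℝᴶ with all entries strictly positive such that all entries of p − Bp are strictly positive (B is 'productive' or 'Leontief'). Then the matrix I − B is invertible, and every entry of (I − B)⁻¹ is nonnegative. -/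
/-!
With `B ≥ 0`, `p > 0` and `p - B p > 0`, an `x` with `(1 - B) x ≥ 0` is itself `≥ 0`:
otherwise take `i` minimising `x i / p i =: t < 0`; then `x ≥ t p` with equality at `i`,
so `((1 - B) x) i ≤ t (p - B p) i < 0`. A matrix with this property has trivial kernel, hence is
invertible, and its inverse maps the nonnegative basis vectors to nonnegative columns.
-/

namespace Matrix

variable {ι R : Type*} [Fintype ι] [Field R] [LinearOrder R] [IsStrictOrderedRing R]

/-- Collatz's monotone matrices; for square matrices this is equivalent to `M⁻¹ ≥ 0`. -/
def IsMonotone (M : Matrix ι ι R) : Prop :=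
  ∀ x, 0 ≤ M *ᵥ x → 0 ≤ x

theorem IsMonotone.injective_mulVec {M : Matrix ι ι R} (hM : M.IsMonotone) :
    Function.Injective M.mulVec := by
  intro x y hxy
  have hxy_nonneg : 0 ≤ x - y := hM _ (by rw [mulVec_sub, hxy, sub_self])
  have hyx_nonneg : 0 ≤ y - x := hM _ (by rw [mulVec_sub, hxy, sub_self])
  exact le_antisymm (sub_nonneg.mp hyx_nonneg) (sub_nonneg.mp hxy_nonneg)

variable [DecidableEq ι] {M : Matrix ι ι R}

theorem IsMonotone.isUnit (hM : M.IsMonotone) : IsUnit M :=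
  mulVec_injective_iff_isUnit.mp hM.injective_mulVec

theorem IsMonotone.inv_nonneg (hM : M.IsMonotone) (i j : ι) : 0 ≤ M⁻¹ i j := by
  have hdet : IsUnit M.det := (isUnit_iff_isUnit_det M).mp hM.isUnit
  have hcol : 0 ≤ M⁻¹ *ᵥ Pi.single j 1 := hM _ <| by
    rw [mulVec_mulVec, mul_nonsing_inv M hdet, one_mulVec]
    exact Pi.single_nonneg.mpr zero_le_one
  simpa [mulVec_single_one] using hcol i

theorem isMonotone_one_sub_of_productive {B : Matrix ι ι R} (hB : ∀ i j, 0 ≤ B i j)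
    {p : ι → R} (hp : ∀ i, 0 < p i) (hprod : ∀ i, 0 < (p - B *ᵥ p) i) :
    (1 - B).IsMonotone := by
  intro x hx
  by_contra hneg
  obtain ⟨k, hk⟩ : ∃ k, x k < 0 := by simpa [Pi.le_def] using hneg
  have : Nonempty ι := ⟨k⟩
  obtain ⟨i, hi⟩ := Finite.exists_min fun j ↦ x j / p j
  set t := x i / p i
  have ht : t < 0 := (hi k).trans_lt (div_neg_of_neg_of_pos hk (hp k))
  have hxi : x i = t * p i := (div_mul_cancel₀ _ (hp i).ne').symm
  have htp : t • p ≤ x := fun j ↦ (le_div_iff₀ (hp j)).mp (hi j)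
  have hBx : t * (B *ᵥ p) i ≤ (B *ᵥ x) i := by
    rw [← smul_eq_mul, ← Pi.smul_apply, ← mulVec_smul]
    exact dotProduct_le_dotProduct_of_nonneg_left htp fun j ↦ hB i j
  have hxi_nonneg : 0 ≤ x i - (B *ᵥ x) i := by simpa [sub_mulVec] using hx i
  have hxi_neg : x i - (B *ᵥ x) i < 0 :=
    calc x i - (B *ᵥ x) i ≤ t * (p - B *ᵥ p) i := by rw [Pi.sub_apply]; linarith
      _ < 0 := mul_neg_of_neg_of_pos ht (hprod i)
  exact hxi_neg.not_ge hxi_nonneg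

end Matrix

theorem leontief_inverse_exists_nonneg_general
    (J : ℕ) (B : Matrix (Fin J) (Fin J) ℝ)
    (hB : ∀ i j, 0 ≤ B i j)
    (p : Fin J → ℝ) (hp : ∀ i, 0 < p i)
    (hprod : ∀ i, 0 < (p - B.mulVec p) i) :
    IsUnit (1 - B) ∧ ∀ i j, 0 ≤ (1 - B)⁻¹ i j := by
  have hmono := Matrix.isMonotone_one_sub_of_productive hB hp hprod
  exact ⟨hmono.isUnit, hmono.inv_nonneg⟩

/-- If `B` is a `J × J` matrix with nonnegative entries and there exists a
strictly positive vector `p` with `p - B *ᵥ p` strictly positive entrywise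
(`B` is "productive"/"Leontief"), then `I - B` is invertible and every entry
of `(I - B)⁻¹` is nonnegative. -/
theorem leontief_inverse_exists_nonneg
    (J : ℕ) (hJ : 0 < J) (B : Matrix (Fin J) (Fin J) ℝ)
    (hB : ∀ i j, 0 ≤ B i j)
    (p : Fin J → ℝ) (hp : ∀ i, 0 < p i)
    (hprod : ∀ i, 0 < (p - B.mulVec p) i) :
    IsUnit (1 - B) ∧ ∀ i j, 0 ≤ (1 - B)⁻¹ i j :=
  leontief_inverse_exists_nonneg_general J B hB p hp hprod
end
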